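/- Let n ≥ 0, m ≥ 0 and 𝔞 ∈ A_n(m). Then σ(τ𝔞) = σ(𝔞). Consequently, for every k = ⌊n/2⌋ and nonnegative integers d_0,…,d_k, the set Q_n(d_0,…,d_k) is stable under the involution τ. -/

import Mathlib

/- Common definitions following K. O'Hara's spread/degree and the signature
   refinement; elements of A_n(m) are lists of naturals of length n+1 and sum m. -/

namespace OHara

/-- The spread of `a = (a_0, …, a_n)`: the maximum of `a_i + a_{i+1}` over `0 ≤ i ≤ n-1`
(`0` if the list has length ≤ 1). -/
def sprL (a : List ℕ) : ℕ :=
  (Finset.range (a.length - 1)).sup (fun i => a.getD i 0 + a.getD (i + 1) 0)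

/-- `M(a)`: the set of left indices of maximal pairs. -/
def Mset (a : List ℕ) : Finset ℕ :=
  (Finset.range (a.length - 1)).filter (fun i => a.getD i 0 + a.getD (i + 1) 0 = sprL a)

/-- The connected component (maximal interval of consecutive integers) of `i` inside `S`. -/
def compF (S : Finset ℕ) (i : ℕ) : Finset ℕ :=
  S.filter (fun j => Finset.Icc (min i j) (max i j) ⊆ S)

/-- The left endpoints of the maximal intervals of consecutive integers of `S`. -/
def leftEnds (S : Finset ℕ) : Finset ℕ :=
  S.filter (fun i => i = 0 ∨ (i - 1) ∉ S)

/-- O'Hara's degree: the sum over the maximal intervals `D` of `M(a)` of `⌈|D|/2⌉`. -/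
def ecdL (a : List ℕ) : ℕ :=
  ∑ i ∈ leftEnds (Mset a), ((compF (Mset a) i).card + 1) / 2

/-- The set of active indices `Act(a) = M(a) ∪ (1 + M(a))`. -/
def ActF (a : List ℕ) : Finset ℕ :=
  Mset a ∪ (Mset a).image (· + 1)

/-- An index `j` survives in `ω(a)` iff it is not active, or it is the left endpoint `c` of a
maximal interval `D = [c, c+d]` of `M(a)` with `d` odd (i.e. `|D|` even). -/
def survivesB (a : List ℕ) (j : ℕ) : Bool :=
  decide (j ∉ ActF a ∨ (j ∈ leftEnds (Mset a) ∧ Even (compF (Mset a) j).card))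

/-- `ω(a)`: the result of removing from `a` the largest possible number of maximal pairs. -/
def omegaL (a : List ℕ) : List ℕ :=
  ((List.range a.length).filter (fun j => survivesB a j)).map (fun j => a.getD j 0)

/-- Fuel-driven recursion computing the signature (the fuel `a.length` in `sigmaL`
always suffices, since `ω` shortens a list of length ≥ 3 by at least 2). -/
def sigmaAux : ℕ → List ℕ → List ℕ
  | _, [] => []
  | 0, a => [a.sum]
  | fuel + 1, a =>
    if a.length ≤ 2 then [a.sum]
    else List.replicate (ecdL a - 1) 0 ++ [sprL a - sprL (omegaL a)] ++ sigmaAux fuel (omegaL a)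

/-- The signature `σ(a)`. -/
def sigmaL (a : List ℕ) : List ℕ := sigmaAux a.length a

/-- `m = Σ_{j=0}^k (j+1)·d_j` determined by a signature `(d_0, …, d_k)`. -/
def mOf (ds : List ℕ) : ℕ := ∑ j ∈ Finset.range ds.length, (j + 1) * ds.getD j 0

/-- `Q_n(d_0, …, d_k)`: the set of elements of `A_n(m)` of signature `(d_0, …, d_k)`. -/
def Qset (n : ℕ) (ds : List ℕ) : Set (List ℕ) :=
  {a | a.length = n + 1 ∧ a.sum = mOf ds ∧ sigmaL a = ds}

/-- The rank `rk(a) = Σ i·a_i`. -/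
def rkL (a : List ℕ) : ℕ := ∑ i ∈ Finset.range a.length, i * a.getD i 0

/-- `b` covers `a` in `A_n(m)`: `b` is obtained from `a` by replacing some consecutive pair
`(a_i, a_{i+1})` by `(a_i - 1, a_{i+1} + 1)`. -/
def coversL (b a : List ℕ) : Prop :=
  ∃ i, i + 1 < a.length ∧ 0 < a.getD i 0 ∧
    b = (a.set i (a.getD i 0 - 1)).set (i + 1) (a.getD (i + 1) 0 + 1)

/-- Normalization phase of the raising algorithm: starting at index `i ∈ M(a)`, repeatedly
replace `i` by `i - 1` as long as `i ≥ 1` and `a_{i+1} = a_{i-1}`. -/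
def rnormIdx (a : List ℕ) : ℕ → ℕ
  | 0 => 0
  | i + 1 => if a.getD (i + 2) 0 = a.getD i 0 then rnormIdx a i else i + 1

/-- One move of the raising algorithm from `(a, i)` with `i ∈ M(a)`: after normalizing the
index, either halt (`none`, at an initial element) or perform one step. -/
def raiseMove (a : List ℕ) (i : ℕ) : Option (List ℕ × ℕ) :=
  let j := rnormIdx a i
  if a.getD (j + 1) 0 = 0 then none
  else some ((a.set j (a.getD j 0 + 1)).set (j + 1) (a.getD (j + 1) 0 - 1), j)

/-- The list of elements produced by iterating the raising algorithm (including the start). -/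
def raiseList : ℕ → List ℕ → ℕ → List (List ℕ)
  | 0, a, _ => [a]
  | fuel + 1, a, i =>
    match raiseMove a i with
    | none => [a]
    | some (a', j) => a :: raiseList fuel a' j

/-- Normalization phase of the lowering algorithm: starting at index `i ∈ M(a)`, repeatedly
replace `i` by `i + 1` as long as `i ≤ n - 2` and `a_i = a_{i+2}` (fuel-driven). -/
def lnormIdx (a : List ℕ) : ℕ → ℕ → ℕ
  | 0, i => i
  | fuel + 1, i =>
    if i + 2 < a.length ∧ a.getD i 0 = a.getD (i + 2) 0 then lnormIdx a fuel (i + 1) else i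

/-- One move of the lowering algorithm from `(a, i)` with `i ∈ M(a)`: after normalizing the
index, either halt (`none`, at a terminal element) or perform one step. -/
def lowerMove (a : List ℕ) (i : ℕ) : Option (List ℕ × ℕ) :=
  let j := lnormIdx a a.length i
  if a.getD j 0 = 0 then none
  else some ((a.set j (a.getD j 0 - 1)).set (j + 1) (a.getD (j + 1) 0 + 1), j)

/-- The list of elements produced by iterating the lowering algorithm (including the start). -/
def lowerList : ℕ → List ℕ → ℕ → List (List ℕ)
  | 0, a, _ => [a]
  | fuel + 1, a, i =>
    match lowerMove a i with
    | none => [a]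
    | some (a', j) => a :: lowerList fuel a' j

/-- The colors of the successive covering relations produced by the lowering algorithm:
a lowering step at index `j` replaces `(a_j, a_{j+1})` by `(a_j - 1, a_{j+1} + 1)` and has
color `j + 1`. -/
def lowerColors : ℕ → List ℕ → ℕ → List ℕ
  | 0, _, _ => []
  | fuel + 1, a, i =>
    match lowerMove a i with
    | none => []
    | some (a', j) => (j + 1) :: lowerColors fuel a' j

/-- The transversal chain `T_i(a)`: the elements obtained from `a` by the raising algorithm
together with those obtained by the lowering algorithm, both started at index `i ∈ M(a)`.
(The fuels `rk(a)` and `a.length * a.sum` are always sufficient, since each raising move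
decreases the rank by 1 and each lowering move increases it by 1, within `[0, n·m]`.) -/
def Tset (a : List ℕ) (i : ℕ) : Set (List ℕ) :=
  {x | x ∈ raiseList (rkL a) a i ∨ x ∈ lowerList (a.length * a.sum) a i}

end OHara

/-! Reversal reflects the pair indices `i ↦ n - 1 - i`, so it preserves the spread, reflects
`M(𝔞)` together with its maximal intervals, and hence preserves the degree. In `ω`, a maximal
interval `D = [c, c + d]` of `M(𝔞)` with `|D|` even keeps the entry `a_c`, while in `ω(τ𝔞)` its
reflection keeps the entry coming from `a_{c + |D|}`. As `a_i + a_{i+1}` is constant on `D`, we have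
`a_i = a_{i+2}` there, so these two entries agree. Moving each such kept index to the far end of
its block is an order-preserving bijection between the two sets of kept indices, whence
`ω(τ𝔞) = τ ω(𝔞)`, and the signature is invariant by induction along its recursion. -/

theorem List.eq_map_of_pairwise_lt {α : Type*} [LinearOrder α] {l₁ l₂ : List α} {φ : α → α}
    (h₁ : l₁.Pairwise (· < ·)) (h₂ : l₂.Pairwise (· < ·))
    (hφ : ∀ x ∈ l₁, ∀ y ∈ l₁, x < y → φ x < φ y) (hmem : ∀ y, (∃ x ∈ l₁, φ x = y) ↔ y ∈ l₂) :
    l₂ = l₁.map φ :=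
  h₂.eq_of_mem_iff (List.pairwise_map.2 (h₁.imp_of_mem fun hx hy => hφ _ hx _ hy))
    fun y => by rw [List.mem_map, hmem]

namespace OHara

open Finset

section Components

variable {S : Finset ℕ} {i j : ℕ}

theorem mem_compF : j ∈ compF S i ↔ Icc (min i j) (max i j) ⊆ S := by
  simp only [compF, mem_filter, and_iff_right_iff_imp]
  exact fun h => h (mem_Icc.2 ⟨min_le_right _ _, le_max_right _ _⟩)

theorem compF_subset : compF S i ⊆ S := filter_subset _ _

theorem mem_compF_comm : j ∈ compF S i ↔ i ∈ compF S j := by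
  rw [mem_compF, mem_compF, min_comm, max_comm]

theorem mem_compF_self (h : i ∈ S) : i ∈ compF S i :=
  mem_compF.2 fun x hx => by
    rw [min_self, max_self, Icc_self, mem_singleton] at hx
    exact hx ▸ h

theorem mem_compF_trans {k : ℕ} (hij : j ∈ compF S i) (hjk : k ∈ compF S j) :
    k ∈ compF S i := by
  rw [mem_compF] at *
  intro x hx
  rw [mem_Icc] at hx
  by_cases hx' : min i j ≤ x ∧ x ≤ max i j
  · exact hij (mem_Icc.2 hx')
  · exact hjk (mem_Icc.2 (by omega))

theorem compF_eq_of_mem (h : j ∈ compF S i) : compF S j = compF S i :=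
  ext fun _ => ⟨mem_compF_trans h, mem_compF_trans (mem_compF_comm.1 h)⟩

theorem compF_eq_Icc {p q : ℕ} (hpq : Icc p q ⊆ S) (hp : p = 0 ∨ p - 1 ∉ S) (hq : q + 1 ∉ S)
    (hi : i ∈ Icc p q) : compF S i = Icc p q := by
  rw [mem_Icc] at hi
  ext j
  rw [mem_compF, mem_Icc]
  constructor
  · intro h
    by_contra hj
    rcases Nat.lt_or_ge j p with hjp | hjp
    · rcases hp with hp | hp
      · omega
      · exact hp (h (mem_Icc.2 (by omega)))
    · exact hq (h (mem_Icc.2 (by omega)))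
  · intro hj x hx
    exact hpq (mem_Icc.2 (by rw [mem_Icc] at hx; omega))

theorem exists_compF_eq_Icc (h : i ∈ S) :
    ∃ p q, i ∈ Icc p q ∧ compF S i = Icc p q ∧ (p = 0 ∨ p - 1 ∉ S) ∧ q + 1 ∉ S := by
  have hne : (compF S i).Nonempty := ⟨i, mem_compF_self h⟩
  set p := (compF S i).min' hne
  set q := (compF S i).max' hne
  have hpi : p ≤ i := min'_le _ _ (mem_compF_self h)
  have hiq : i ≤ q := le_max' _ _ (mem_compF_self h)
  have hpS : Icc p i ⊆ S := by
    have := mem_compF.1 (min'_mem _ hne : p ∈ compF S i)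
    rwa [min_eq_right hpi, max_eq_left hpi] at this
  have hqS : Icc i q ⊆ S := by
    have := mem_compF.1 (max'_mem _ hne : q ∈ compF S i)
    rwa [min_eq_left hiq, max_eq_right hiq] at this
  have hpqS : Icc p q ⊆ S := fun x hx => by
    rw [mem_Icc] at hx
    rcases le_total x i with hxi | hix
    · exact hpS (mem_Icc.2 ⟨hx.1, hxi⟩)
    · exact hqS (mem_Icc.2 ⟨hix, hx.2⟩)
  have hp : p = 0 ∨ p - 1 ∉ S := by
    refine or_iff_not_imp_left.2 fun hp0 hp1 => ?_
    have : p - 1 ∈ compF S i := mem_compF.2 fun x hx => by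
      rw [mem_Icc] at hx
      rcases Nat.eq_or_lt_of_le hx.1 with hx1 | hx1
      · rw [← hx1, min_eq_right (by omega)]
        exact hp1
      · exact hpS (mem_Icc.2 (by omega))
    have := min'_le _ _ this
    omega
  have hq : q + 1 ∉ S := fun hq1 => by
    have : q + 1 ∈ compF S i := mem_compF.2 fun x hx => by
      rw [mem_Icc] at hx
      rcases Nat.lt_or_ge q x with hx1 | hx1
      · rw [show x = q + 1 by omega]
        exact hq1
      · exact hqS (mem_Icc.2 (by omega))
    have := le_max' _ _ this
    omega
  exact ⟨p, q, mem_Icc.2 ⟨hpi, hiq⟩, compF_eq_Icc hpqS hp hq (mem_Icc.2 ⟨hpi, hiq⟩), hp, hq⟩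

theorem mem_leftEnds : i ∈ leftEnds S ↔ i ∈ S ∧ (i = 0 ∨ i - 1 ∉ S) := mem_filter

theorem compF_eq_Icc_of_mem_leftEnds (h : i ∈ leftEnds S) :
    ∃ q, i ≤ q ∧ compF S i = Icc i q ∧ q + 1 ∉ S := by
  obtain ⟨hiS, hi⟩ := mem_leftEnds.1 h
  obtain ⟨p, q, hipq, hcomp, -, hq⟩ := exists_compF_eq_Icc hiS
  rw [mem_Icc] at hipq
  obtain rfl : p = i := by
    by_contra hpi
    have : i - 1 ∈ S := compF_subset (hcomp ▸ mem_Icc.2 (by omega))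
    rcases hi with hi | hi <;> [omega; exact hi this]
  exact ⟨q, hipq.2, hcomp, hq⟩

theorem exists_mem_leftEnds_compF_eq (h : i ∈ S) :
    ∃ c ∈ leftEnds S, compF S c = compF S i := by
  obtain ⟨p, q, hipq, hcomp, hp, -⟩ := exists_compF_eq_Icc h
  rw [mem_Icc] at hipq
  have hpc : p ∈ compF S i := hcomp ▸ mem_Icc.2 ⟨le_rfl, hipq.1.trans hipq.2⟩
  exact ⟨p, mem_leftEnds.2 ⟨compF_subset hpc, hp⟩, compF_eq_of_mem hpc⟩

theorem eq_of_compF_eq {c c' : ℕ} (hc : c ∈ leftEnds S) (hc' : c' ∈ leftEnds S)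
    (h : compF S c = compF S c') : c = c' := by
  wlog hlt : c < c' generalizing c c'
  · rcases (not_lt.1 hlt).eq_or_lt with heq | hlt'
    · exact heq.symm
    · exact (this hc' hc h.symm hlt').symm
  have hc'c : c' ∈ compF S c := h ▸ mem_compF_self (mem_leftEnds.1 hc').1
  have : c' - 1 ∈ S := mem_compF.1 hc'c (mem_Icc.2 (by omega))
  rcases (mem_leftEnds.1 hc').2 with h0 | h0 <;> [omega; exact absurd this h0]

/-- Each maximal interval of `S` has exactly one left end. -/
theorem sum_leftEnds_eq_sum_image_compF {M : Type*} [AddCommMonoid M] (g : Finset ℕ → M) :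
    ∑ c ∈ leftEnds S, g (compF S c) = ∑ D ∈ S.image (compF S), g D := by
  have himage : (leftEnds S).image (compF S) = S.image (compF S) := by
    refine Subset.antisymm (image_subset_image (filter_subset _ _)) fun D hD => ?_
    obtain ⟨i, hi, rfl⟩ := mem_image.1 hD
    obtain ⟨c, hc, hci⟩ := exists_mem_leftEnds_compF_eq hi
    exact mem_image.2 ⟨c, hc, hci⟩
  rw [← himage, sum_image fun c hc c' hc' h => eq_of_compF_eq hc hc' h]

end Components

section Reflection

variable {K : ℕ} {T : Finset ℕ}

theorem mem_image_tsub (hT : ∀ i ∈ T, i ≤ K) {x : ℕ} :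
    x ∈ T.image (K - ·) ↔ x ≤ K ∧ K - x ∈ T := by
  simp only [mem_image]
  constructor
  · rintro ⟨i, hi, rfl⟩
    have := hT i hi
    exact ⟨Nat.sub_le _ _, by rwa [Nat.sub_sub_self this]⟩
  · rintro ⟨hx, hKx⟩
    exact ⟨K - x, hKx, Nat.sub_sub_self hx⟩

theorem tsub_mem_image_tsub (hT : ∀ i ∈ T, i ≤ K) {x : ℕ} (hx : x ≤ K) :
    K - x ∈ T.image (K - ·) ↔ x ∈ T := by
  rw [mem_image_tsub hT, Nat.sub_sub_self hx, and_iff_right (Nat.sub_le _ _)]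

theorem image_tsub_image_tsub (hT : ∀ i ∈ T, i ≤ K) : (T.image (K - ·)).image (K - ·) = T := by
  rw [image_image]
  exact (image_congr fun i hi => Nat.sub_sub_self (hT i hi)).trans image_id

theorem compF_image_tsub (hT : ∀ i ∈ T, i ≤ K) {i : ℕ} (hi : i ≤ K) :
    compF (T.image (K - ·)) (K - i) = (compF T i).image (K - ·) := by
  ext x
  rw [mem_image_tsub fun j hj => hT j (compF_subset hj), mem_compF, mem_compF]
  constructor
  · intro h
    have hx : x ≤ K :=
      ((mem_image_tsub hT).1 (h (mem_Icc.2 ⟨min_le_right _ _, le_max_right _ _⟩))).1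
    refine ⟨hx, fun y hy => ?_⟩
    rw [mem_Icc] at hy
    have := (mem_image_tsub hT).1 (h (mem_Icc.2 (by omega : min (K - i) x ≤ K - y ∧ _)))
    rwa [Nat.sub_sub_self (by omega), and_iff_right (Nat.sub_le _ _)] at this
  · rintro ⟨hx, h⟩ y hy
    rw [mem_Icc] at hy
    exact (mem_image_tsub hT).2 ⟨by omega, h (mem_Icc.2 (by omega))⟩

theorem mem_leftEnds_image_tsub (hT : ∀ i ∈ T, i ≤ K) {x : ℕ} :
    x ∈ leftEnds (T.image (K - ·)) ↔ x ≤ K ∧ K - x ∈ T ∧ K - x + 1 ∉ T := by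
  rw [mem_leftEnds, mem_image_tsub hT, mem_image_tsub hT, and_assoc]
  refine and_congr_right fun hx => and_congr_right fun _ => ?_
  rcases Nat.eq_zero_or_pos x with rfl | hx0
  · simp only [true_or, Nat.sub_zero, true_iff]
    exact fun h => by have := hT _ h; omega
  · rw [show K - (x - 1) = K - x + 1 by omega]
    simp only [hx0.ne', false_or, not_and, show x - 1 ≤ K by omega, forall_const]

theorem sum_leftEnds_image_tsub {M : Type*} [AddCommMonoid M] (hT : ∀ i ∈ T, i ≤ K)
    (g : ℕ → M) :
    ∑ c ∈ leftEnds (T.image (K - ·)), g (compF (T.image (K - ·)) c).card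
      = ∑ c ∈ leftEnds T, g (compF T c).card := by
  have hcomp : (T.image (K - ·)).image (compF (T.image (K - ·)))
      = (T.image (compF T)).image (image (K - ·)) := by
    rw [image_image, image_image]
    exact image_congr fun i hi => compF_image_tsub hT (hT i hi)
  have hsub : ∀ D ∈ T.image (compF T), ∀ i ∈ D, i ≤ K := by
    simp only [mem_image]
    rintro D ⟨j, -, rfl⟩ i hi
    exact hT i (compF_subset hi)
  rw [sum_leftEnds_eq_sum_image_compF (g ·.card), sum_leftEnds_eq_sum_image_compF (g ·.card),
    hcomp, sum_image fun D hD E hE h => by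
      rw [← image_tsub_image_tsub (hsub D hD), ← image_tsub_image_tsub (hsub E hE)]
      exact congrArg _ h]
  refine sum_congr rfl fun D hD => ?_
  rw [card_image_of_injOn fun i hi j hj h => by
    have := hsub D hD i hi; have := hsub D hD j hj; omega]

end Reflection

section Reverse

variable {a : List ℕ} {i j : ℕ}

theorem getD_reverse (hj : j < a.length) :
    a.reverse.getD j 0 = a.getD (a.length - 1 - j) 0 := by
  rw [List.getD_eq_getElem _ _ (by simpa using hj), List.getD_eq_getElem _ _ (by omega),
    List.getElem_reverse]

theorem pair_sum_reverse (hi : i + 1 < a.length) :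
    a.reverse.getD i 0 + a.reverse.getD (i + 1) 0
      = a.getD (a.length - 2 - i) 0 + a.getD (a.length - 2 - i + 1) 0 := by
  rw [getD_reverse (by omega), getD_reverse hi, add_comm,
    show a.length - 1 - (i + 1) = a.length - 2 - i by omega,
    show a.length - 1 - i = a.length - 2 - i + 1 by omega]

theorem sprL_reverse_le (a : List ℕ) : sprL a.reverse ≤ sprL a := by
  refine Finset.sup_le fun i hi => ?_
  rw [List.length_reverse, mem_range] at hi
  rw [pair_sum_reverse (by omega)]
  exact le_sup (f := fun i => a.getD i 0 + a.getD (i + 1) 0) (mem_range.2 (by omega))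

theorem sprL_reverse (a : List ℕ) : sprL a.reverse = sprL a :=
  le_antisymm (sprL_reverse_le a) (by simpa using sprL_reverse_le a.reverse)

theorem mem_Mset :
    i ∈ Mset a ↔ i + 1 < a.length ∧ a.getD i 0 + a.getD (i + 1) 0 = sprL a := by
  rw [Mset, mem_filter, mem_range, Nat.lt_sub_iff_add_lt]

theorem add_two_le_length_of_mem_Mset (hi : i ∈ Mset a) : i + 2 ≤ a.length :=
  (mem_Mset.1 hi).1

theorem le_of_mem_Mset (hi : i ∈ Mset a) : i ≤ a.length - 2 := by
  have := add_two_le_length_of_mem_Mset hi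
  omega

theorem Mset_reverse (a : List ℕ) : Mset a.reverse = (Mset a).image (a.length - 2 - ·) := by
  ext i
  rw [mem_image_tsub fun _ => le_of_mem_Mset, mem_Mset, mem_Mset, List.length_reverse,
    sprL_reverse]
  constructor
  · rintro ⟨hi, hsum⟩
    exact ⟨by omega, by omega, by rwa [← pair_sum_reverse hi]⟩
  · rintro ⟨hi, hi', hsum⟩
    have hi1 : i + 1 < a.length := by omega
    exact ⟨hi1, by rwa [pair_sum_reverse hi1]⟩

theorem ecdL_reverse (a : List ℕ) : ecdL a.reverse = ecdL a := by
  rw [ecdL, ecdL, Mset_reverse]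
  exact sum_leftEnds_image_tsub (fun _ => le_of_mem_Mset) (fun t => (t + 1) / 2)

end Reverse

section Survivors

variable {a : List ℕ} {i j : ℕ}

theorem mem_ActF : j ∈ ActF a ↔ j ∈ Mset a ∨ (0 < j ∧ j - 1 ∈ Mset a) := by
  simp only [ActF, mem_union, mem_image]
  refine or_congr_right ⟨?_, fun h => ⟨j - 1, h.2, by omega⟩⟩
  rintro ⟨i, hi, rfl⟩
  exact ⟨i.succ_pos, hi⟩

theorem ActF_reverse (a : List ℕ) : ActF a.reverse = (ActF a).image (a.length - 1 - ·) := by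
  have h₁ : (Mset a).image (a.length - 2 - ·)
      = ((Mset a).image (· + 1)).image (a.length - 1 - ·) := by
    rw [image_image]
    exact image_congr fun i hi => by
      have := add_two_le_length_of_mem_Mset hi; simp only [Function.comp_apply]; omega
  have h₂ : ((Mset a).image (a.length - 2 - ·)).image (· + 1)
      = (Mset a).image (a.length - 1 - ·) := by
    rw [image_image]
    exact image_congr fun i hi => by
      have := add_two_le_length_of_mem_Mset hi; simp only [Function.comp_apply]; omega
  rw [ActF, ActF, Mset_reverse, image_union, h₂, union_comm, ← h₁]

theorem le_of_mem_ActF (hj : j ∈ ActF a) : j ≤ a.length - 1 := by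
  rcases mem_ActF.1 hj with h | ⟨h0, h⟩ <;>
  · have := add_two_le_length_of_mem_Mset h
    omega

/-- The survival rule of `omegaL`, mirrored: of an even maximal interval `D` of `Mset a` it keeps
the entry just after the active block of `D` instead of the first one. -/
def survivesFromRight (a : List ℕ) (j : ℕ) : Bool :=
  decide (j ∉ ActF a ∨
    (0 < j ∧ j - 1 ∈ Mset a ∧ j ∉ Mset a ∧ Even (compF (Mset a) (j - 1)).card))

theorem survivesB_reverse (hj : j < a.length) :
    survivesB a.reverse (a.length - 1 - j) = survivesFromRight a j := by
  have hM : ∀ i ∈ Mset a, i ≤ a.length - 2 := fun _ => le_of_mem_Mset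
  have hAct : a.length - 1 - j ∈ ActF a.reverse ↔ j ∈ ActF a := by
    rw [ActF_reverse, tsub_mem_image_tsub (fun _ => le_of_mem_ActF) (by omega)]
  have hend : (a.length - 1 - j ∈ leftEnds (Mset a.reverse) ∧
        Even (compF (Mset a.reverse) (a.length - 1 - j)).card) ↔
      (0 < j ∧ j - 1 ∈ Mset a ∧ j ∉ Mset a ∧ Even (compF (Mset a) (j - 1)).card) := by
    rw [Mset_reverse, mem_leftEnds_image_tsub hM]
    rcases j with _ | j
    · simp only [Nat.sub_zero, lt_irrefl, false_and, iff_false, not_and]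
      rintro ⟨hL, h0, -⟩ -
      have := add_two_le_length_of_mem_Mset h0
      omega
    · rw [show a.length - 1 - (j + 1) = a.length - 2 - j by omega, Nat.sub_sub_self (by omega),
        compF_image_tsub hM (by omega), card_image_of_injOn fun x hx y hy h => by
          have := hM x (compF_subset hx); have := hM y (compF_subset hy); omega]
      simp only [Nat.add_sub_cancel, j.succ_pos, true_and, Nat.sub_le, and_assoc]
  simp only [survivesB, survivesFromRight, hAct, hend]

end Survivors

section Shift

variable {a : List ℕ} {c i j : ℕ}

def survivorShift (a : List ℕ) (j : ℕ) : ℕ :=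
  if j ∈ leftEnds (Mset a) ∧ Even (compF (Mset a) j).card then j + (compF (Mset a) j).card
  else j

theorem le_survivorShift : j ≤ survivorShift a j := by
  unfold survivorShift
  split_ifs <;> omega

theorem survivorShift_eq_succ {q : ℕ}
    (hc : c ∈ leftEnds (Mset a) ∧ Even (compF (Mset a) c).card) (hcq : c ≤ q)
    (hcomp : compF (Mset a) c = Icc c q) : survivorShift a c = q + 1 := by
  rw [survivorShift, if_pos hc, hcomp, Nat.card_Icc]
  omega

theorem survivesB_eq_false_of_pred_mem (hj : 0 < j) (h : j - 1 ∈ Mset a) :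
    survivesB a j = false := by
  have hAct : j ∈ ActF a := mem_ActF.2 (Or.inr ⟨hj, h⟩)
  have hend : j ∉ leftEnds (Mset a) := fun h' => by
    rcases (mem_leftEnds.1 h').2 with h' | h' <;> [omega; exact h' h]
  simp [survivesB, hAct, hend]

theorem getD_add_two_of_mem_Mset (hi : i ∈ Mset a) (hi' : i + 1 ∈ Mset a) :
    a.getD (i + 2) 0 = a.getD i 0 := by
  have h₁ := (mem_Mset.1 hi).2
  have h₂ : a.getD (i + 1) 0 + a.getD (i + 2) 0 = sprL a := (mem_Mset.1 hi').2
  omega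

theorem getD_add_two_mul (h : Ico c (c + 2 * i) ⊆ Mset a) :
    a.getD (c + 2 * i) 0 = a.getD c 0 := by
  induction i with
  | zero => rfl
  | succ i ih =>
    have hmem : ∀ x, c ≤ x → x < c + 2 * (i + 1) → x ∈ Mset a :=
      fun x h₁ h₂ => h (mem_Ico.2 ⟨h₁, h₂⟩)
    rw [show c + 2 * (i + 1) = c + 2 * i + 2 by ring,
      getD_add_two_of_mem_Mset (hmem _ (by omega) (by omega)) (hmem _ (by omega) (by omega))]
    exact ih fun x hx => by rw [mem_Ico] at hx; exact hmem x (by omega) (by omega)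

theorem getD_survivorShift : a.getD (survivorShift a j) 0 = a.getD j 0 := by
  by_cases hj : j ∈ leftEnds (Mset a) ∧ Even (compF (Mset a) j).card
  · obtain ⟨q, hjq, hcomp, -⟩ := compF_eq_Icc_of_mem_leftEnds hj.1
    obtain ⟨k, hk⟩ := hj.2
    rw [hcomp, Nat.card_Icc] at hk
    rw [survivorShift_eq_succ hj hjq hcomp, show q + 1 = j + 2 * k by omega]
    refine getD_add_two_mul fun x hx => compF_subset (i := j) ?_
    rw [hcomp, mem_Icc]
    rw [mem_Ico] at hx
    omega
  · rw [survivorShift, if_neg hj]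

theorem survivorShift_lt_survivorShift (hj : survivesB a j) (hij : i < j) :
    survivorShift a i < survivorShift a j := by
  by_cases hi' : i ∈ leftEnds (Mset a) ∧ Even (compF (Mset a) i).card
  · obtain ⟨q, hiq, hcomp, -⟩ := compF_eq_Icc_of_mem_leftEnds hi'.1
    rw [survivorShift_eq_succ hi' hiq hcomp]
    have : q + 1 < j := by
      by_contra hjq
      have : j - 1 ∈ Mset a := compF_subset (by rw [hcomp, mem_Icc]; omega)
      rw [survivesB_eq_false_of_pred_mem (by omega) this] at hj
      exact Bool.false_ne_true hj
    exact this.trans_le le_survivorShift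
  · rw [survivorShift, if_neg hi']
    exact hij.trans_le le_survivorShift

theorem survivesFromRight_survivorShift (hi : i < a.length) (hsurv : survivesB a i) :
    survivorShift a i < a.length ∧ survivesFromRight a (survivorShift a i) := by
  by_cases hi' : i ∈ leftEnds (Mset a) ∧ Even (compF (Mset a) i).card
  · obtain ⟨q, hiq, hcomp, hq⟩ := compF_eq_Icc_of_mem_leftEnds hi'.1
    have hqi : q ∈ compF (Mset a) i := by rw [hcomp, mem_Icc]; omega
    have := add_two_le_length_of_mem_Mset (compF_subset hqi)
    rw [survivorShift_eq_succ hi' hiq hcomp, survivesFromRight]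
    refine ⟨by omega, decide_eq_true (Or.inr ⟨q.succ_pos, compF_subset hqi, hq, ?_⟩)⟩
    rw [Nat.add_sub_cancel, compF_eq_of_mem hqi]
    exact hi'.2
  · rw [survivorShift, if_neg hi']
    simp only [survivesB, hi', or_false, decide_eq_true_eq] at hsurv
    exact ⟨hi, decide_eq_true (Or.inl hsurv)⟩

theorem exists_survivorShift_eq (hj : j < a.length) (hsurv : survivesFromRight a j) :
    ∃ i < a.length, survivesB a i ∧ survivorShift a i = j := by
  simp only [survivesFromRight, decide_eq_true_eq] at hsurv
  rcases hsurv with hAct | ⟨hj0, hjM, hjM', heven⟩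
  · have hj' : ¬(j ∈ leftEnds (Mset a) ∧ Even (compF (Mset a) j).card) :=
      fun h => hAct (mem_ActF.2 (Or.inl (mem_leftEnds.1 h.1).1))
    exact ⟨j, hj, decide_eq_true (Or.inl hAct), if_neg hj'⟩
  · obtain ⟨c, hc, hcomp⟩ := exists_mem_leftEnds_compF_eq hjM
    obtain ⟨q, hcq, hcq', hq⟩ := compF_eq_Icc_of_mem_leftEnds hc
    have hjq : j - 1 ∈ Icc c q := hcq' ▸ hcomp ▸ mem_compF_self hjM
    rw [mem_Icc] at hjq
    obtain rfl : q = j - 1 := by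
      by_contra hne
      exact hjM' (compF_subset (by rw [hcq', mem_Icc]; omega))
    have hc' : c ∈ leftEnds (Mset a) ∧ Even (compF (Mset a) c).card := ⟨hc, hcomp ▸ heven⟩
    refine ⟨c, by omega, decide_eq_true (Or.inr hc'), ?_⟩
    rw [survivorShift_eq_succ hc' hcq hcq']
    omega

end Shift

theorem filter_survivesFromRight_range (a : List ℕ) :
    (List.range a.length).filter (survivesFromRight a)
      = ((List.range a.length).filter (survivesB a)).map (survivorShift a) := by
  refine List.eq_map_of_pairwise_lt (List.pairwise_lt_range.filter _)
    (List.pairwise_lt_range.filter _) (fun i _ j hj hij => ?_) fun j => ?_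
  · exact survivorShift_lt_survivorShift (List.mem_filter.1 hj).2 hij
  · simp only [List.mem_filter, List.mem_range]
    constructor
    · rintro ⟨i, ⟨hi, hsurv⟩, rfl⟩
      exact survivesFromRight_survivorShift hi hsurv
    · rintro ⟨hj, hsurv⟩
      obtain ⟨i, hi, hsurv', rfl⟩ := exists_survivorShift_eq hj hsurv
      exact ⟨i, ⟨hi, hsurv'⟩, rfl⟩

theorem omegaL_reverse (a : List ℕ) : omegaL a.reverse = (omegaL a).reverse := by
  have hrange :
      List.range a.length = ((List.range a.length).map (a.length - 1 - ·)).reverse := by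
    have := List.reverse_range' (s := 0) (n := a.length)
    rw [Nat.zero_add, ← List.range_eq_range'] at this
    rw [← this, List.reverse_reverse]
  have hfilter : (List.range a.length).filter ((survivesB a.reverse ·) ∘ (a.length - 1 - ·))
      = (List.range a.length).filter (survivesFromRight a) :=
    List.filter_congr fun j hj => survivesB_reverse (List.mem_range.1 hj)
  rw [omegaL, omegaL, List.length_reverse, hrange, List.filter_reverse, List.filter_map,
    List.map_reverse, List.map_map, ← hrange, hfilter, filter_survivesFromRight_range,
    List.map_map]
  congr 1
  refine List.map_congr_left fun j hj => ?_
  rw [List.mem_filter, List.mem_range] at hj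
  have hlt := (survivesFromRight_survivorShift hj.1 hj.2).1
  simp only [Function.comp_apply]
  rw [getD_reverse (by omega), Nat.sub_sub_self (by omega), getD_survivorShift]

theorem sigmaAux_zero_of_ne_nil {a : List ℕ} (ha : a ≠ []) : sigmaAux 0 a = [a.sum] := by
  cases a
  · exact absurd rfl ha
  · rfl

theorem sigmaAux_succ_of_ne_nil {fuel : ℕ} {a : List ℕ} (ha : a ≠ []) :
    sigmaAux (fuel + 1) a = if a.length ≤ 2 then [a.sum] else
      List.replicate (ecdL a - 1) 0 ++ [sprL a - sprL (omegaL a)] ++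
        sigmaAux fuel (omegaL a) := by
  cases a
  · exact absurd rfl ha
  · rfl

theorem sigmaAux_reverse (fuel : ℕ) (a : List ℕ) :
    sigmaAux fuel a.reverse = sigmaAux fuel a := by
  induction fuel generalizing a with
  | zero =>
    rcases eq_or_ne a [] with rfl | ha
    · rfl
    rw [sigmaAux_zero_of_ne_nil ha, sigmaAux_zero_of_ne_nil (List.reverse_ne_nil_iff.2 ha),
      List.sum_reverse]
  | succ fuel ih =>
    rcases eq_or_ne a [] with rfl | ha
    · rfl
    rw [sigmaAux_succ_of_ne_nil ha, sigmaAux_succ_of_ne_nil (List.reverse_ne_nil_iff.2 ha),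
      List.length_reverse, List.sum_reverse, ecdL_reverse, sprL_reverse, omegaL_reverse,
      sprL_reverse, ih]

theorem sigmaL_reverse (a : List ℕ) : sigmaL a.reverse = sigmaL a := by
  rw [sigmaL, sigmaL, List.length_reverse, sigmaAux_reverse]

theorem reverse_mem_Qset {n : ℕ} {ds a : List ℕ} (ha : a ∈ Qset n ds) :
    a.reverse ∈ Qset n ds := by
  obtain ⟨hlen, hsum, hsigma⟩ := ha
  exact ⟨by rwa [List.length_reverse], by rwa [List.sum_reverse], by rwa [sigmaL_reverse]⟩

end OHara

open OHara in
theorem sigma_tau_invariant_general (n : ℕ)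
    (a : List ℕ) :
    sigmaL a.reverse = sigmaL a ∧
    ∀ ds : List ℕ, ds.length = n / 2 + 1 → a ∈ Qset n ds → a.reverse ∈ Qset n ds :=
  ⟨sigmaL_reverse a, fun _ _ => reverse_mem_Qset⟩

open OHara in
/-- The signature is invariant under the reversal involution `τ`; consequently each level
set `Q_n(d_0, …, d_k)` of the signature map is stable under `τ`. -/
theorem sigma_tau_invariant (n m : ℕ)
    (a : List ℕ) (hlen : a.length = n + 1) (hsum : a.sum = m) :
    sigmaL a.reverse = sigmaL a ∧
    ∀ ds : List ℕ, ds.length = n / 2 + 1 → a ∈ Qset n ds → a.reverse ∈ Qset n ds :=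
  sigma_tau_invariant_general n a
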